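/- Let E₂ be a Banach space with property (α) and H a separable Hilbert space. A function f : E₁ → γ(H,E₂) is L²_γ-Lipschitz with constant comparable to C if and only if for all finite sequences (x_n), (y_n) in E₁: E‖∑_n γ_n (f(x_n) − f(y_n))‖²_{γ(H,E₂)} ≤ C² E‖∑_n γ_n (x_n − y_n)‖² + C² ∑_n ‖x_n − y_n‖². In particular, every bounded linear operator f ∈ L(E₁, γ(H,E₂)) is L²_γ-Lipschitz. -/

import Mathlib

open MeasureTheory ProbabilityTheory
open scoped ENNReal NNReal

noncomputable section

/-- An independent family of standard real Gaussian random variables indexed by `ι`. -/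
def IsGaussianFamily {ι Ω : Type*} [MeasurableSpace Ω] (P : Measure Ω)
    (g : ι → Ω → ℝ) : Prop :=
  (∀ i, Measurable (g i)) ∧ iIndepFun g P ∧
    ∀ i, Measure.map (g i) P = gaussianReal 0 1

variable {E₁ E₂ H : Type*} [NormedAddCommGroup E₁] [NormedSpace ℝ E₁]
  [NormedAddCommGroup E₂] [NormedSpace ℝ E₂]
  [NormedAddCommGroup H] [InnerProductSpace ℝ H]
  {Ω Ω' Ω'' : Type*} [MeasurableSpace Ω] [MeasurableSpace Ω'] [MeasurableSpace Ω'']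

/-- `f : E₁ → γ(H,E₂)` is `L²_γ`-Lipschitz with constant `C`: for a doubly indexed array
`(γ_{nm})` of independent standard Gaussians and an orthonormal basis `(h_m)` of `H`,
`E‖∑_n ∑_m γ_{nm}(f(x_n)h_m − f(y_n)h_m)‖² ≤ C² E‖∑_n γ_n(x_n−y_n)‖² + C² ∑_n ‖x_n−y_n‖²`. -/
def DoubleGaussCond (P : Measure Ω) (P'' : Measure Ω'') (g : ℕ → Ω → ℝ)
    (gg : ℕ × ℕ → Ω'' → ℝ) (bH : HilbertBasis ℕ ℝ H)
    (f : E₁ → H →L[ℝ] E₂) (C : ℝ) : Prop :=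
  ∀ (N : ℕ) (x y : ℕ → E₁),
    (⨆ M, ∫⁻ ω'', (‖∑ n ∈ Finset.range N, ∑ m ∈ Finset.range M,
        gg (n, m) ω'' • ((f (x n)) (bH m) - (f (y n)) (bH m))‖₊ : ℝ≥0∞) ^ 2 ∂P'')
      ≤ ENNReal.ofReal (C ^ 2) *
          (∫⁻ ω, (‖∑ n ∈ Finset.range N, g n ω • (x n - y n)‖₊ : ℝ≥0∞) ^ 2 ∂P)
        + ENNReal.ofReal (C ^ 2) *
            ∑ n ∈ Finset.range N, (‖x n - y n‖₊ : ℝ≥0∞) ^ 2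

/-- The single-Gaussian-sum condition with the `γ(H,E₂)` norm inside:
`E‖∑_n γ_n (f(x_n) − f(y_n))‖²_{γ(H,E₂)} ≤ C² E‖∑_n γ_n(x_n−y_n)‖² + C² ∑_n ‖x_n−y_n‖²`,
where the `γ(H,E₂)` norm is computed with a second independent Gaussian sequence. -/
def SingleGaussCond (P : Measure Ω) (P' : Measure Ω') (g : ℕ → Ω → ℝ)
    (g' : ℕ → Ω' → ℝ) (bH : HilbertBasis ℕ ℝ H)
    (f : E₁ → H →L[ℝ] E₂) (C : ℝ) : Prop :=
  ∀ (N : ℕ) (x y : ℕ → E₁),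
    (∫⁻ ω, (⨆ M, ∫⁻ ω', (‖∑ n ∈ Finset.range N, ∑ m ∈ Finset.range M,
        (g n ω * g' m ω') • ((f (x n)) (bH m) - (f (y n)) (bH m))‖₊ : ℝ≥0∞) ^ 2 ∂P') ∂P)
      ≤ ENNReal.ofReal (C ^ 2) *
          (∫⁻ ω, (‖∑ n ∈ Finset.range N, g n ω • (x n - y n)‖₊ : ℝ≥0∞) ^ 2 ∂P)
        + ENNReal.ofReal (C ^ 2) *
            ∑ n ∈ Finset.range N, (‖x n - y n‖₊ : ℝ≥0∞) ^ 2

lemma gaussian_map_neg : (gaussianReal 0 1).map (fun x => -x) = gaussianReal 0 1 := by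
  have h := gaussianReal_map_const_mul (μ := 0) (v := 1) (-1)
  simp only [neg_one_mul, mul_zero] at h
  convert h using 2
  ext
  norm_num

lemma ptwise {E₂ : Type*} [NormedAddCommGroup E₂] [NormedSpace ℝ E₂] (a c : E₂) :
    2 * (‖a‖₊ : ℝ≥0∞)^2 ≤ (‖a + c‖₊:ℝ≥0∞)^2 + (‖a - c‖₊:ℝ≥0∞)^2 := by
  have e : a + a = (a + c) + (a - c) := by abel
  have h0 := norm_add_le (a+c) (a-c)
  rw [← e] at h0
  have e2 : ‖a + a‖ = 2*‖a‖ := by rw [← two_smul ℝ a, norm_smul]; simp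
  have hr : 2*‖a‖^2 ≤ ‖a+c‖^2 + ‖a-c‖^2 := by
    nlinarith [h0, e2, norm_nonneg a, norm_nonneg (a+c), norm_nonneg (a-c), mul_le_mul h0 h0 (norm_nonneg _) (by positivity), sq_nonneg (‖a+c‖ - ‖a-c‖)]
  have conv : ∀ x : E₂, (‖x‖₊ : ℝ≥0∞)^2 = ENNReal.ofReal (‖x‖^2) := by
    intro x; rw [ENNReal.ofReal_pow (norm_nonneg x), ofReal_norm, enorm_eq_nnnorm]
  rw [conv, conv, conv, ← ENNReal.ofReal_add (by positivity) (by positivity)]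
  calc 2 * ENNReal.ofReal (‖a‖^2) = ENNReal.ofReal (2*‖a‖^2) := by
        rw [ENNReal.ofReal_mul (by norm_num)]; norm_num
    _ ≤ _ := ENNReal.ofReal_le_ofReal hr

lemma meas_aux {ι Ω E₂ : Type*} [NormedAddCommGroup E₂] [NormedSpace ℝ E₂] [Countable ι] [MeasurableSpace Ω]
    (s : Finset ι) (c : ι → Ω → ℝ) (hc : ∀ i, Measurable (c i)) (z : ι → E₂) :
    Measurable fun ω => (‖∑ i ∈ s, c i ω • z i‖₊ : ℝ≥0∞) ^ 2 := by
  have hψ : Continuous fun v : ι → ℝ => (‖∑ i ∈ s, v i • z i‖₊ : ℝ≥0∞) ^ 2 := by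
    apply (ENNReal.continuous_pow 2).comp
    apply ENNReal.continuous_coe.comp
    apply Continuous.nnnorm
    exact continuous_finset_sum _ fun i _ => (continuous_apply i).smul continuous_const
  exact hψ.measurable.comp (measurable_pi_lambda _ fun i => hc i)

lemma mono_step {E₂ Ω' : Type*} [NormedAddCommGroup E₂] [NormedSpace ℝ E₂]
    [MeasurableSpace Ω'] (P' : Measure Ω') [IsProbabilityMeasure P']
    {g' : ℕ → Ω' → ℝ} (hg' : IsGaussianFamily P' g') (u : ℕ → E₂) (M : ℕ) :
    ∫⁻ ω', (‖∑ m ∈ Finset.range M, g' m ω' • u m‖₊ : ℝ≥0∞) ^ 2 ∂P'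
      ≤ ∫⁻ ω', (‖∑ m ∈ Finset.range (M+1), g' m ω' • u m‖₊ : ℝ≥0∞) ^ 2 ∂P' := by
  obtain ⟨hmeas, hindep, hlaw⟩ := hg'
  set b := u M with hb
  set A : Ω' → E₂ := fun ω' => ∑ m ∈ Finset.range M, g' m ω' • u m with hA
  set X : Ω' → (↥(Finset.range M) → ℝ) := fun a i => g' i a with hX
  set Y : Ω' → ℝ := g' M with hY
  have hXmeas : Measurable X := measurable_pi_lambda _ fun i => hmeas i
  have hYmeas : Measurable Y := hmeas M
  have hXY : IndepFun X Y P' := by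
    have h := hindep.indepFun_finset (Finset.range M) {M}
      (by simp only [Finset.disjoint_left, Finset.mem_range, Finset.mem_singleton]; omega) hmeas
    exact h.comp measurable_id (measurable_pi_apply ⟨M, Finset.mem_singleton_self M⟩)
  have hmap : P'.map (fun a => (X a, Y a)) = (P'.map X).prod (P'.map Y) :=
    (indepFun_iff_map_prod_eq_prod_map_map hXmeas.aemeasurable hYmeas.aemeasurable).mp hXY
  have hYlaw : P'.map Y = gaussianReal 0 1 := hlaw M
  set S : (↥(Finset.range M) → ℝ) → E₂ := fun v => ∑ i, v i • u i with hS
  have hSX : ∀ ω', S (X ω') = A ω' := by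
    intro ω'
    simp only [hS, hX, hA]
    rw [← Finset.sum_attach (Finset.range M) (fun m => g' m ω' • u m)]
    rfl
  set Fp : (↥(Finset.range M) → ℝ) × ℝ → ℝ≥0∞ :=
    fun p => (‖S p.1 + p.2 • b‖₊ : ℝ≥0∞) ^ 2 with hFp
  set Fm : (↥(Finset.range M) → ℝ) × ℝ → ℝ≥0∞ :=
    fun p => (‖S p.1 - p.2 • b‖₊ : ℝ≥0∞) ^ 2 with hFm
  have hScont : Continuous S :=
    continuous_finset_sum _ fun i _ => (continuous_apply i).smul continuous_const
  have hcont : ∀ (sgn : ℝ), Continuous (fun p : (↥(Finset.range M) → ℝ) × ℝ =>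
      (‖S p.1 + (sgn * p.2) • b‖₊ : ℝ≥0∞) ^ 2) := by
    intro sgn
    apply (ENNReal.continuous_pow 2).comp
    apply ENNReal.continuous_coe.comp
    apply Continuous.nnnorm
    exact ((hScont.comp continuous_fst).add
      ((continuous_const.mul continuous_snd).smul continuous_const))
  have hFpm : Measurable Fp := by
    have := (hcont 1).measurable
    simpa [one_mul] using this
  have hFmm : Measurable Fm := by
    have h := (hcont (-1)).measurable
    have e : (fun p : (↥(Finset.range M) → ℝ) × ℝ => (‖S p.1 + ((-1:ℝ) * p.2) • b‖₊ : ℝ≥0∞)^2) = Fm := by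
      funext p
      simp only [hFm, neg_one_mul, neg_smul, ← sub_eq_add_neg]
    rwa [e] at h
  -- key symmetry
  have key : ∫⁻ ω', Fp (X ω', Y ω') ∂P' = ∫⁻ ω', Fm (X ω', Y ω') ∂P' := by
    have hpair : Measurable fun a => (X a, Y a) := hXmeas.prodMk hYmeas
    rw [← lintegral_map hFpm hpair, ← lintegral_map hFmm hpair, hmap, hYlaw]
    rw [lintegral_prod _ hFpm.aemeasurable, lintegral_prod _ hFmm.aemeasurable]
    refine lintegral_congr fun v => ?_
    have : ∀ t : ℝ, Fp (v, -t) = Fm (v, t) := by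
      intro t; simp [hFp, hFm, neg_smul, sub_eq_add_neg]
    have hm : Measurable fun t : ℝ => Fp (v, t) := hFpm.comp measurable_prodMk_left
    conv_lhs => rw [← gaussian_map_neg]
    rw [lintegral_map hm measurable_neg]
    exact lintegral_congr fun t => this t
  -- pointwise bound and conclusion
  have hsucc : ∀ ω', ∑ m ∈ Finset.range (M+1), g' m ω' • u m = A ω' + Y ω' • b := by
    intro ω'; rw [Finset.sum_range_succ]
  have hup : ∀ ω', Fp (X ω', Y ω') = (‖A ω' + Y ω' • b‖₊ : ℝ≥0∞) ^ 2 := by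
    intro ω'; simp only [hFp, hSX]
  have hum : ∀ ω', Fm (X ω', Y ω') = (‖A ω' - Y ω' • b‖₊ : ℝ≥0∞) ^ 2 := by
    intro ω'; simp only [hFm, hSX]
  have h2 : 2 * ∫⁻ ω', (‖A ω'‖₊ : ℝ≥0∞) ^ 2 ∂P'
      ≤ 2 * ∫⁻ ω', (‖A ω' + Y ω' • b‖₊ : ℝ≥0∞) ^ 2 ∂P' := by
    calc 2 * ∫⁻ ω', (‖A ω'‖₊ : ℝ≥0∞) ^ 2 ∂P'
        = ∫⁻ ω', 2 * (‖A ω'‖₊ : ℝ≥0∞) ^ 2 ∂P' := (lintegral_const_mul' 2 _ (by norm_num)).symm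
      _ ≤ ∫⁻ ω', ((‖A ω' + Y ω' • b‖₊ : ℝ≥0∞) ^ 2 + (‖A ω' - Y ω' • b‖₊ : ℝ≥0∞) ^ 2) ∂P' :=
          lintegral_mono fun ω' => ptwise (A ω') (Y ω' • b)
      _ = (∫⁻ ω', (‖A ω' + Y ω' • b‖₊ : ℝ≥0∞) ^ 2 ∂P')
          + ∫⁻ ω', (‖A ω' - Y ω' • b‖₊ : ℝ≥0∞) ^ 2 ∂P' := by
          refine lintegral_add_left ?_ _
          have h := hFpm.comp (hXmeas.prodMk hYmeas)
          have e : (fun ω' => Fp (X ω', Y ω')) = fun ω' => (‖A ω' + Y ω' • b‖₊:ℝ≥0∞)^2 := funext hup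
          rw [← e]; exact h
      _ = 2 * ∫⁻ ω', (‖A ω' + Y ω' • b‖₊ : ℝ≥0∞) ^ 2 ∂P' := by
          have : (∫⁻ ω', (‖A ω' - Y ω' • b‖₊ : ℝ≥0∞) ^ 2 ∂P')
              = ∫⁻ ω', (‖A ω' + Y ω' • b‖₊ : ℝ≥0∞) ^ 2 ∂P' := by
            simp only [← hup, ← hum]; exact key.symm
          rw [this, two_mul]
  have := (ENNReal.mul_le_mul_iff_right (a := 2) (by norm_num) (by norm_num)).mp h2
  calc ∫⁻ ω', (‖∑ m ∈ Finset.range M, g' m ω' • u m‖₊ : ℝ≥0∞) ^ 2 ∂P'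
      = ∫⁻ ω', (‖A ω'‖₊ : ℝ≥0∞) ^ 2 ∂P' := rfl
    _ ≤ ∫⁻ ω', (‖A ω' + Y ω' • b‖₊ : ℝ≥0∞) ^ 2 ∂P' := this
    _ = _ := by refine lintegral_congr fun ω' => ?_; rw [hsucc]

lemma coe_nnnorm_sq {E₂ : Type*} [NormedAddCommGroup E₂] (x : E₂) :
    (‖x‖₊ : ℝ≥0∞)^2 = ENNReal.ofReal (‖x‖^2) := by
  rw [ENNReal.ofReal_pow (norm_nonneg x), ofReal_norm, enorm_eq_nnnorm]

lemma rearr {E₂ : Type*} [NormedAddCommGroup E₂] [NormedSpace ℝ E₂]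
    (N M : ℕ) (a bc : ℕ → ℝ) (z : ℕ → ℕ → E₂) :
    ∑ n ∈ Finset.range N, ∑ m ∈ Finset.range M, (a n * bc m) • z n m
      = ∑ m ∈ Finset.range M, bc m • ∑ n ∈ Finset.range N, a n • z n m := by
  rw [Finset.sum_comm]
  refine Finset.sum_congr rfl fun m _ => ?_
  rw [Finset.smul_sum]
  exact Finset.sum_congr rfl fun n _ => by rw [smul_smul, mul_comm]


/-- Let `E₂` have property (α) (with constant `Kα`, expressed through the
comparability of doubly indexed Gaussian sums against products of two independent Gaussian
sequences).  A function `f : E₁ → γ(H,E₂)` is `L²_γ`-Lipschitz with constant comparable to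
`C` iff the single-sum condition holds with constant comparable to `C`; in particular
every bounded linear operator `F : E₁ → γ(H,E₂)` is `L²_γ`-Lipschitz. -/
theorem stmt13 (P : Measure Ω) (P' : Measure Ω') (P'' : Measure Ω'')
    [IsProbabilityMeasure P] [IsProbabilityMeasure P'] [IsProbabilityMeasure P'']
    (g : ℕ → Ω → ℝ) (g' : ℕ → Ω' → ℝ) (gg : ℕ × ℕ → Ω'' → ℝ)
    (hg : IsGaussianFamily P g) (hg' : IsGaussianFamily P' g')
    (hgg : IsGaussianFamily P'' gg)
    (bH : HilbertBasis ℕ ℝ H)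
    (Kα : ℝ≥0∞) (hKα : 1 ≤ Kα) (hKαfin : Kα ≠ ∞)
    (hα : ∀ (N M : ℕ) (x : ℕ → ℕ → E₂),
      (∫⁻ ω'', (‖∑ n ∈ Finset.range N, ∑ m ∈ Finset.range M,
          gg (n, m) ω'' • x n m‖₊ : ℝ≥0∞) ^ 2 ∂P'')
        ≤ Kα * ∫⁻ ω, ∫⁻ ω', (‖∑ n ∈ Finset.range N, ∑ m ∈ Finset.range M,
            (g n ω * g' m ω') • x n m‖₊ : ℝ≥0∞) ^ 2 ∂P' ∂P ∧
      (∫⁻ ω, ∫⁻ ω', (‖∑ n ∈ Finset.range N, ∑ m ∈ Finset.range M,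
          (g n ω * g' m ω') • x n m‖₊ : ℝ≥0∞) ^ 2 ∂P' ∂P)
        ≤ Kα * ∫⁻ ω'', (‖∑ n ∈ Finset.range N, ∑ m ∈ Finset.range M,
            gg (n, m) ω'' • x n m‖₊ : ℝ≥0∞) ^ 2 ∂P'') :
    ∃ K : ℝ, 1 ≤ K ∧
      (∀ (f : E₁ → H →L[ℝ] E₂) (C : ℝ), 0 ≤ C →
        (DoubleGaussCond P P'' g gg bH f C → SingleGaussCond P P' g g' bH f (K * C)) ∧
        (SingleGaussCond P P' g g' bH f C → DoubleGaussCond P P'' g gg bH f (K * C))) ∧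
      ∀ F : E₁ →L[ℝ] (H →L[ℝ] E₂),
        (∃ MF : ℝ, 0 ≤ MF ∧ ∀ x : E₁,
          (⨆ M, ∫⁻ ω', (‖∑ m ∈ Finset.range M, g' m ω' • (F x) (bH m)‖₊ : ℝ≥0∞) ^ 2 ∂P')
            ≤ ENNReal.ofReal ((MF * ‖x‖) ^ 2)) →
        ∃ C : ℝ, 0 ≤ C ∧ DoubleGaussCond P P'' g gg bH (fun x => F x) C := by
  obtain ⟨hgm, hgi, hgl⟩ := hg
  have hg'full : IsGaussianFamily P' g' := hg'
  obtain ⟨hg'm, hg'i, hg'l⟩ := hg'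
  set K : ℝ := max 1 (Real.sqrt Kα.toReal) with hKdef
  have hK1 : (1:ℝ) ≤ K := le_max_left _ _
  have hKα_le : Kα ≤ ENNReal.ofReal (K ^ 2) := by
    have h1 : Kα = ENNReal.ofReal Kα.toReal := (ENNReal.ofReal_toReal hKαfin).symm
    rw [h1]
    apply ENNReal.ofReal_le_ofReal
    have h2 : Real.sqrt Kα.toReal ≤ K := le_max_right _ _
    calc Kα.toReal = (Real.sqrt Kα.toReal)^2 := (Real.sq_sqrt ENNReal.toReal_nonneg).symm
      _ ≤ K^2 := by nlinarith [Real.sqrt_nonneg Kα.toReal]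
  have hconst : ∀ C : ℝ, Kα * ENNReal.ofReal (C^2) ≤ ENNReal.ofReal ((K*C)^2) := by
    intro C
    rw [mul_pow, ENNReal.ofReal_mul (sq_nonneg K)]
    exact mul_le_mul_left hKα_le _
  -- joint measurability of the inner integral
  have hImeas : ∀ (N : ℕ) (z : ℕ → ℕ → E₂) (M : ℕ),
      Measurable (fun ω => ∫⁻ ω', (‖∑ n ∈ Finset.range N, ∑ m ∈ Finset.range M,
        (g n ω * g' m ω') • z n m‖₊ : ℝ≥0∞)^2 ∂P') := by
    intro N z M
    have hjoint : Measurable (fun p : Ω × Ω' => (‖∑ n ∈ Finset.range N, ∑ m ∈ Finset.range M,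
        (g n p.1 * g' m p.2) • z n m‖₊ : ℝ≥0∞)^2) := by
      have h := meas_aux (Ω := Ω × Ω') ((Finset.range N) ×ˢ (Finset.range M))
        (fun q p => g q.1 p.1 * g' q.2 p.2)
        (fun q => ((hgm q.1).comp measurable_fst).mul ((hg'm q.2).comp measurable_snd))
        (fun q => z q.1 q.2)
      simpa [Finset.sum_product] using h
    exact hjoint.lintegral_prod_right'
  -- monotonicity of the inner integral in M
  have hmono : ∀ (N : ℕ) (z : ℕ → ℕ → E₂) (ω : Ω),
      Monotone (fun M => ∫⁻ ω', (‖∑ n ∈ Finset.range N, ∑ m ∈ Finset.range M,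
        (g n ω * g' m ω') • z n m‖₊ : ℝ≥0∞)^2 ∂P') := by
    intro N z ω
    apply monotone_nat_of_le_succ
    intro M
    simp only [rearr]
    exact mono_step P' hg'full (fun m => ∑ n ∈ Finset.range N, g n ω • z n m) M
  refine ⟨K, hK1, fun f C hC => ⟨?_, ?_⟩, ?_⟩
  · -- Double → Single
    intro hD N x y
    set z : ℕ → ℕ → E₂ := fun n m => (f (x n)) (bH m) - (f (y n)) (bH m) with hz
    have key : (∫⁻ ω, (⨆ M, ∫⁻ ω', (‖∑ n ∈ Finset.range N, ∑ m ∈ Finset.range M,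
          (g n ω * g' m ω') • z n m‖₊ : ℝ≥0∞) ^ 2 ∂P') ∂P)
        = ⨆ M, ∫⁻ ω, ∫⁻ ω', (‖∑ n ∈ Finset.range N, ∑ m ∈ Finset.range M,
          (g n ω * g' m ω') • z n m‖₊ : ℝ≥0∞) ^ 2 ∂P' ∂P :=
      lintegral_iSup (hImeas N z) (fun a b hab ω => hmono N z ω hab)
    refine le_trans (le_of_eq key) (iSup_le fun M => ?_)
    calc (∫⁻ ω, ∫⁻ ω', (‖∑ n ∈ Finset.range N, ∑ m ∈ Finset.range M,
          (g n ω * g' m ω') • z n m‖₊ : ℝ≥0∞) ^ 2 ∂P' ∂P)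
        ≤ Kα * ∫⁻ ω'', (‖∑ n ∈ Finset.range N, ∑ m ∈ Finset.range M,
            gg (n, m) ω'' • z n m‖₊ : ℝ≥0∞) ^ 2 ∂P'' := (hα N M z).2
      _ ≤ Kα * ⨆ M', ∫⁻ ω'', (‖∑ n ∈ Finset.range N, ∑ m ∈ Finset.range M',
            gg (n, m) ω'' • z n m‖₊ : ℝ≥0∞) ^ 2 ∂P'' :=
          mul_le_mul_right (le_iSup (fun M' => ∫⁻ ω'', (‖∑ n ∈ Finset.range N,
            ∑ m ∈ Finset.range M', gg (n, m) ω'' • z n m‖₊ : ℝ≥0∞) ^ 2 ∂P'') M) _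
      _ ≤ Kα * (ENNReal.ofReal (C ^ 2) *
            (∫⁻ ω, (‖∑ n ∈ Finset.range N, g n ω • (x n - y n)‖₊ : ℝ≥0∞) ^ 2 ∂P)
          + ENNReal.ofReal (C ^ 2) *
              ∑ n ∈ Finset.range N, (‖x n - y n‖₊ : ℝ≥0∞) ^ 2) :=
          mul_le_mul_right (hD N x y) _
      _ = (Kα * ENNReal.ofReal (C ^ 2)) *
            (∫⁻ ω, (‖∑ n ∈ Finset.range N, g n ω • (x n - y n)‖₊ : ℝ≥0∞) ^ 2 ∂P)
          + (Kα * ENNReal.ofReal (C ^ 2)) *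
              ∑ n ∈ Finset.range N, (‖x n - y n‖₊ : ℝ≥0∞) ^ 2 := by ring
      _ ≤ ENNReal.ofReal ((K * C) ^ 2) *
            (∫⁻ ω, (‖∑ n ∈ Finset.range N, g n ω • (x n - y n)‖₊ : ℝ≥0∞) ^ 2 ∂P)
          + ENNReal.ofReal ((K * C) ^ 2) *
              ∑ n ∈ Finset.range N, (‖x n - y n‖₊ : ℝ≥0∞) ^ 2 :=
          add_le_add (mul_le_mul_left (hconst C) _) (mul_le_mul_left (hconst C) _)
  · -- Single → Double
    intro hS N x y
    set z : ℕ → ℕ → E₂ := fun n m => (f (x n)) (bH m) - (f (y n)) (bH m) with hz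
    refine iSup_le fun M => ?_
    calc (∫⁻ ω'', (‖∑ n ∈ Finset.range N, ∑ m ∈ Finset.range M,
          gg (n, m) ω'' • z n m‖₊ : ℝ≥0∞) ^ 2 ∂P'')
        ≤ Kα * ∫⁻ ω, ∫⁻ ω', (‖∑ n ∈ Finset.range N, ∑ m ∈ Finset.range M,
            (g n ω * g' m ω') • z n m‖₊ : ℝ≥0∞) ^ 2 ∂P' ∂P := (hα N M z).1
      _ ≤ Kα * ∫⁻ ω, (⨆ M', ∫⁻ ω', (‖∑ n ∈ Finset.range N, ∑ m ∈ Finset.range M',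
            (g n ω * g' m ω') • z n m‖₊ : ℝ≥0∞) ^ 2 ∂P') ∂P :=
          mul_le_mul_right (lintegral_mono fun ω => le_iSup (fun M' => ∫⁻ ω',
            (‖∑ n ∈ Finset.range N, ∑ m ∈ Finset.range M',
              (g n ω * g' m ω') • z n m‖₊ : ℝ≥0∞) ^ 2 ∂P') M) _
      _ ≤ Kα * (ENNReal.ofReal (C ^ 2) *
            (∫⁻ ω, (‖∑ n ∈ Finset.range N, g n ω • (x n - y n)‖₊ : ℝ≥0∞) ^ 2 ∂P)
          + ENNReal.ofReal (C ^ 2) *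
              ∑ n ∈ Finset.range N, (‖x n - y n‖₊ : ℝ≥0∞) ^ 2) :=
          mul_le_mul_right (hS N x y) _
      _ = (Kα * ENNReal.ofReal (C ^ 2)) *
            (∫⁻ ω, (‖∑ n ∈ Finset.range N, g n ω • (x n - y n)‖₊ : ℝ≥0∞) ^ 2 ∂P)
          + (Kα * ENNReal.ofReal (C ^ 2)) *
              ∑ n ∈ Finset.range N, (‖x n - y n‖₊ : ℝ≥0∞) ^ 2 := by ring
      _ ≤ ENNReal.ofReal ((K * C) ^ 2) *
            (∫⁻ ω, (‖∑ n ∈ Finset.range N, g n ω • (x n - y n)‖₊ : ℝ≥0∞) ^ 2 ∂P)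
          + ENNReal.ofReal ((K * C) ^ 2) *
              ∑ n ∈ Finset.range N, (‖x n - y n‖₊ : ℝ≥0∞) ^ 2 :=
          add_le_add (mul_le_mul_left (hconst C) _) (mul_le_mul_left (hconst C) _)
  · -- bounded operators
    rintro F ⟨MF, hMF0, hMF⟩
    refine ⟨Real.sqrt Kα.toReal * MF, mul_nonneg (Real.sqrt_nonneg _) hMF0, ?_⟩
    intro N x y
    set z : ℕ → ℕ → E₂ := fun n m => (F (x n)) (bH m) - (F (y n)) (bH m) with hz
    set u : Ω → E₁ := fun ω => ∑ n ∈ Finset.range N, g n ω • (x n - y n) with hu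
    have hCsq : ENNReal.ofReal ((Real.sqrt Kα.toReal * MF)^2)
        = Kα * ENNReal.ofReal (MF^2) := by
      rw [mul_pow, Real.sq_sqrt ENNReal.toReal_nonneg,
        ENNReal.ofReal_mul ENNReal.toReal_nonneg, ENNReal.ofReal_toReal hKαfin]
    have hsum : ∀ (ω : Ω) (m : ℕ), (∑ n ∈ Finset.range N, g n ω • z n m)
        = (F (u ω)) (bH m) := by
      intro ω m
      simp only [hz, hu, map_sum, _root_.map_smul, ContinuousLinearMap.sum_apply,
        ContinuousLinearMap.smul_apply, map_sub, ContinuousLinearMap.sub_apply,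
        smul_sub]
    refine iSup_le fun M => ?_
    have step1 : (∫⁻ ω'', (‖∑ n ∈ Finset.range N, ∑ m ∈ Finset.range M,
          gg (n, m) ω'' • z n m‖₊ : ℝ≥0∞) ^ 2 ∂P'')
        ≤ Kα * ∫⁻ ω, ∫⁻ ω', (‖∑ n ∈ Finset.range N, ∑ m ∈ Finset.range M,
            (g n ω * g' m ω') • z n m‖₊ : ℝ≥0∞) ^ 2 ∂P' ∂P := (hα N M z).1
    have step2 : ∀ ω : Ω, (∫⁻ ω', (‖∑ n ∈ Finset.range N, ∑ m ∈ Finset.range M,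
          (g n ω * g' m ω') • z n m‖₊ : ℝ≥0∞) ^ 2 ∂P')
        ≤ ENNReal.ofReal (MF^2) * (‖u ω‖₊ : ℝ≥0∞)^2 := by
      intro ω
      have e1 : (∫⁻ ω', (‖∑ n ∈ Finset.range N, ∑ m ∈ Finset.range M,
            (g n ω * g' m ω') • z n m‖₊ : ℝ≥0∞) ^ 2 ∂P')
          = ∫⁻ ω', (‖∑ m ∈ Finset.range M, g' m ω' • (F (u ω)) (bH m)‖₊ : ℝ≥0∞) ^ 2 ∂P' := by
        refine lintegral_congr fun ω' => ?_
        rw [rearr]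
        congr 1
        · exact congrArg _ (congrArg _ (Finset.sum_congr rfl fun m _ =>
            congrArg _ (hsum ω m)))
      rw [e1]
      calc (∫⁻ ω', (‖∑ m ∈ Finset.range M, g' m ω' • (F (u ω)) (bH m)‖₊ : ℝ≥0∞) ^ 2 ∂P')
          ≤ ⨆ M', ∫⁻ ω', (‖∑ m ∈ Finset.range M',
              g' m ω' • (F (u ω)) (bH m)‖₊ : ℝ≥0∞) ^ 2 ∂P' :=
            le_iSup (fun M' => ∫⁻ ω', (‖∑ m ∈ Finset.range M',
              g' m ω' • (F (u ω)) (bH m)‖₊ : ℝ≥0∞) ^ 2 ∂P') M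
        _ ≤ ENNReal.ofReal ((MF * ‖u ω‖) ^ 2) := hMF (u ω)
        _ = ENNReal.ofReal (MF^2) * (‖u ω‖₊ : ℝ≥0∞)^2 := by
            rw [mul_pow, ENNReal.ofReal_mul (sq_nonneg MF), coe_nnnorm_sq]
    calc (∫⁻ ω'', (‖∑ n ∈ Finset.range N, ∑ m ∈ Finset.range M,
          gg (n, m) ω'' • z n m‖₊ : ℝ≥0∞) ^ 2 ∂P'')
        ≤ Kα * ∫⁻ ω, ∫⁻ ω', (‖∑ n ∈ Finset.range N, ∑ m ∈ Finset.range M,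
            (g n ω * g' m ω') • z n m‖₊ : ℝ≥0∞) ^ 2 ∂P' ∂P := step1
      _ ≤ Kα * ∫⁻ ω, ENNReal.ofReal (MF^2) * (‖u ω‖₊ : ℝ≥0∞)^2 ∂P :=
          mul_le_mul_right (lintegral_mono step2) _
      _ = Kα * (ENNReal.ofReal (MF^2) * ∫⁻ ω, (‖u ω‖₊ : ℝ≥0∞)^2 ∂P) := by
          rw [lintegral_const_mul' _ _ ENNReal.ofReal_ne_top]
      _ = ENNReal.ofReal ((Real.sqrt Kα.toReal * MF)^2) * ∫⁻ ω, (‖u ω‖₊ : ℝ≥0∞)^2 ∂P := by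
          rw [hCsq, mul_assoc]
      _ ≤ ENNReal.ofReal ((Real.sqrt Kα.toReal * MF)^2) *
            (∫⁻ ω, (‖∑ n ∈ Finset.range N, g n ω • (x n - y n)‖₊ : ℝ≥0∞) ^ 2 ∂P)
          + ENNReal.ofReal ((Real.sqrt Kα.toReal * MF)^2) *
              ∑ n ∈ Finset.range N, (‖x n - y n‖₊ : ℝ≥0∞) ^ 2 := le_self_add


end
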